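/- For bounded operators A, B with ‖exp(sA)‖ ≤ 1, ‖exp(sB)‖ ≤ 1, and ‖exp(s(A+B))‖ ≤ 1 for all s ∈ [0,t], the Strang splitting error satisfies ‖exp((t/2)A)exp(tB)exp((t/2)A) − exp(t(A+B))‖ ≤ (t³/24)·(‖[A,[A,B]]‖ + 2‖[B,[A,B]]‖). -/

import Mathlib

open NormedSpace

section StrangHelpers
open intervalIntegral MeasureTheory

variable {𝔸 : Type*} [NormedRing 𝔸] [NormedAlgebra ℝ 𝔸] [CompleteSpace 𝔸]

lemma cont_exp_smul (X : 𝔸) : Continuous (fun u : ℝ => exp (u • X)) :=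
  continuous_iff_continuousAt.2 fun u => (hasDerivAt_exp_smul_const' (𝕂 := ℝ) X u).continuousAt

lemma cont_exp_rev (X : 𝔸) (s : ℝ) : Continuous (fun u : ℝ => exp ((s - u) • X)) :=
  (cont_exp_smul X).comp (continuous_const.sub continuous_id)

lemma hasDerivAt_exp_rev (X : 𝔸) (s u : ℝ) :
    HasDerivAt (fun u : ℝ => exp ((s - u) • X)) (-(X * exp ((s - u) • X))) u := by
  have h := (hasDerivAt_exp_smul_const' (𝕂 := ℝ) X (s - u)).scomp u
    ((hasDerivAt_id u).const_sub s)
  simpa [Function.comp_def] using h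

lemma hasDerivAt_conj (X Y : 𝔸) (s u : ℝ) :
    HasDerivAt (fun u : ℝ => exp (u • X) * Y * exp ((s - u) • X))
      (exp (u • X) * (X * Y - Y * X) * exp ((s - u) • X)) u := by
  have h1 : HasDerivAt (fun u : ℝ => exp (u • X) * Y) (X * exp (u • X) * Y) u :=
    (hasDerivAt_exp_smul_const' (𝕂 := ℝ) X u).mul_const Y
  have h := h1.fun_mul (hasDerivAt_exp_rev X s u)
  convert h using 1
  have hc : X * exp (u • X) = exp (u • X) * X :=
    (((Commute.refl X).smul_right u).exp_right).eq
  have hc2 : X * exp ((s - u) • X) = exp ((s - u) • X) * X :=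
    (((Commute.refl X).smul_right (s - u)).exp_right).eq
  set E1 := exp (u • X) with hE1
  set E2 := exp ((s - u) • X) with hE2
  rw [hc]
  noncomm_ring

lemma conj_sub_eq (X Y : 𝔸) (s a b : ℝ) :
    exp (b • X) * Y * exp ((s - b) • X) - exp (a • X) * Y * exp ((s - a) • X)
      = ∫ v in a..b, exp (v • X) * (X * Y - Y * X) * exp ((s - v) • X) := by
  rw [intervalIntegral.integral_eq_sub_of_hasDerivAt (fun v _ => hasDerivAt_conj X Y s v)
    (Continuous.intervalIntegrable (((cont_exp_smul X).mul continuous_const).mul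
      (cont_exp_rev X s)) a b)]

lemma conj_sub_bound (X Y : 𝔸) (s u : ℝ) (hu0 : 0 ≤ u) (hus : u ≤ s)
    (hX : ∀ v ∈ Set.Icc (0:ℝ) s, ‖exp (v • X)‖ ≤ 1) :
    ‖exp (s • X) * Y - exp (u • X) * Y * exp ((s - u) • X)‖
      ≤ (s - u) * ‖X * Y - Y * X‖ := by
  have h := conj_sub_eq X Y s u s
  simp only [sub_self, zero_smul, exp_zero, mul_one] at h
  rw [h]
  have := intervalIntegral.norm_integral_le_of_norm_le_const
    (C := ‖X * Y - Y * X‖) (a := u) (b := s)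
    (f := fun v => exp (v • X) * (X * Y - Y * X) * exp ((s - v) • X)) ?_
  · calc ‖_‖ ≤ ‖X * Y - Y * X‖ * |s - u| := this
      _ = (s - u) * ‖X * Y - Y * X‖ := by rw [abs_of_nonneg (by linarith : (0:ℝ) ≤ s - u)]; ring
  · intro v hv
    rw [Set.uIoc_of_le hus] at hv
    have h1 : ‖exp (v • X)‖ ≤ 1 := hX v ⟨le_of_lt (lt_of_le_of_lt hu0 hv.1), hv.2⟩
    have h2 : ‖exp ((s - v) • X)‖ ≤ 1 := hX (s - v) ⟨by linarith [hv.2], by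
      have := hv.1; linarith [lt_of_le_of_lt hu0 this]⟩
    calc ‖exp (v • X) * (X * Y - Y * X) * exp ((s - v) • X)‖
        ≤ ‖exp (v • X) * (X * Y - Y * X)‖ * ‖exp ((s - v) • X)‖ := norm_mul_le _ _
      _ ≤ ‖exp (v • X)‖ * ‖X * Y - Y * X‖ * ‖exp ((s - v) • X)‖ := by
          exact mul_le_mul_of_nonneg_right (norm_mul_le _ _) (norm_nonneg _)
      _ ≤ 1 * ‖X * Y - Y * X‖ * 1 := by
          apply mul_le_mul (mul_le_mul_of_nonneg_right h1 (norm_nonneg _)) h2 (norm_nonneg _)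
          positivity
      _ = ‖X * Y - Y * X‖ := by ring

lemma conj_sub_bound' (X Y : 𝔸) (s u : ℝ) (hu0 : 0 ≤ u) (hus : u ≤ s)
    (hX : ∀ v ∈ Set.Icc (0:ℝ) s, ‖exp (v • X)‖ ≤ 1) :
    ‖exp (u • X) * Y * exp ((s - u) • X) - Y * exp (s • X)‖
      ≤ u * ‖X * Y - Y * X‖ := by
  have h := conj_sub_eq X Y s 0 u
  simp only [zero_smul, exp_zero, one_mul, sub_zero] at h
  rw [h]
  have := intervalIntegral.norm_integral_le_of_norm_le_const
    (C := ‖X * Y - Y * X‖) (a := 0) (b := u)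
    (f := fun v => exp (v • X) * (X * Y - Y * X) * exp ((s - v) • X)) ?_
  · calc ‖_‖ ≤ ‖X * Y - Y * X‖ * |u - 0| := this
      _ = u * ‖X * Y - Y * X‖ := by rw [sub_zero, abs_of_nonneg hu0]; ring
  · intro v hv
    rw [Set.uIoc_of_le hu0] at hv
    have h1 : ‖exp (v • X)‖ ≤ 1 := hX v ⟨le_of_lt hv.1, le_trans hv.2 hus⟩
    have h2 : ‖exp ((s - v) • X)‖ ≤ 1 := hX (s - v)
      ⟨by linarith [hv.2], by linarith [hv.1]⟩
    calc ‖exp (v • X) * (X * Y - Y * X) * exp ((s - v) • X)‖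
        ≤ ‖exp (v • X) * (X * Y - Y * X)‖ * ‖exp ((s - v) • X)‖ := norm_mul_le _ _
      _ ≤ ‖exp (v • X)‖ * ‖X * Y - Y * X‖ * ‖exp ((s - v) • X)‖ := by
          exact mul_le_mul_of_nonneg_right (norm_mul_le _ _) (norm_nonneg _)
      _ ≤ 1 * ‖X * Y - Y * X‖ * 1 := by
          apply mul_le_mul (mul_le_mul_of_nonneg_right h1 (norm_nonneg _)) h2 (norm_nonneg _)
          positivity
      _ = ‖X * Y - Y * X‖ := by ring

lemma integral_ramp (s c : ℝ) : (∫ u in (0:ℝ)..s, (s - u) * c) = s ^ 2 / 2 * c := by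
  have h2 : IntervalIntegrable (fun u : ℝ => u) MeasureTheory.volume 0 s :=
    (continuous_id'.intervalIntegrable _ _)
  rw [intervalIntegral.integral_mul_const,
    intervalIntegral.integral_sub intervalIntegrable_const h2, integral_id,
    intervalIntegral.integral_const]
  simp only [smul_eq_mul, sub_zero]
  ring

lemma integral_ramp' (s c : ℝ) : (∫ u in (0:ℝ)..s, u * c) = s ^ 2 / 2 * c := by
  rw [intervalIntegral.integral_mul_const, integral_id]
  ring

lemma key_bound (X Y : 𝔸) (s : ℝ) (hs : 0 ≤ s)
    (hX : ∀ v ∈ Set.Icc (0:ℝ) s, ‖exp (v • X)‖ ≤ 1) :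
    ‖(∫ u in (0:ℝ)..s, exp (u • X) * Y * exp ((s - u) • X)) - s • (exp (s • X) * Y)‖
      ≤ s ^ 2 / 2 * ‖X * Y - Y * X‖ := by
  have hconst : s • (exp (s • X) * Y) = ∫ _ in (0:ℝ)..s, exp (s • X) * Y := by
    rw [intervalIntegral.integral_const, sub_zero]
  rw [hconst, ← intervalIntegral.integral_sub
    (Continuous.intervalIntegrable (((cont_exp_smul X).fun_mul continuous_const).fun_mul
      (cont_exp_rev X s)) _ _) (Continuous.intervalIntegrable continuous_const _ _)]
  have hb := intervalIntegral.norm_integral_le_of_norm_le hs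
    (g := fun u => (s - u) * ‖X * Y - Y * X‖) (μ := MeasureTheory.volume)
    (a := 0) (b := s)
    (f := fun u => exp (u • X) * Y * exp ((s - u) • X) - exp (s • X) * Y) ?_ ?_
  · refine le_trans hb ?_
    rw [integral_ramp]
  · filter_upwards with u hu
    rw [norm_sub_rev]
    exact conj_sub_bound X Y s u hu.1.le hu.2 hX
  · exact Continuous.intervalIntegrable (by continuity) _ _

lemma key_bound' (X Y : 𝔸) (s : ℝ) (hs : 0 ≤ s)
    (hX : ∀ v ∈ Set.Icc (0:ℝ) s, ‖exp (v • X)‖ ≤ 1) :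
    ‖(∫ u in (0:ℝ)..s, exp (u • X) * Y * exp ((s - u) • X)) - s • (Y * exp (s • X))‖
      ≤ s ^ 2 / 2 * ‖X * Y - Y * X‖ := by
  have hconst : s • (Y * exp (s • X)) = ∫ _ in (0:ℝ)..s, Y * exp (s • X) := by
    rw [intervalIntegral.integral_const, sub_zero]
  rw [hconst, ← intervalIntegral.integral_sub
    (Continuous.intervalIntegrable (((cont_exp_smul X).fun_mul continuous_const).fun_mul
      (cont_exp_rev X s)) _ _) (Continuous.intervalIntegrable continuous_const _ _)]
  have hb := intervalIntegral.norm_integral_le_of_norm_le hs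
    (g := fun u => u * ‖X * Y - Y * X‖) (μ := MeasureTheory.volume)
    (a := 0) (b := s)
    (f := fun u => exp (u • X) * Y * exp ((s - u) • X) - Y * exp (s • X)) ?_ ?_
  · refine le_trans hb ?_
    rw [integral_ramp']
  · filter_upwards with u hu
    exact conj_sub_bound' X Y s u hu.1.le hu.2 hX
  · exact Continuous.intervalIntegrable (by continuity) _ _

lemma defect_bound (A B : 𝔸) (t s : ℝ) (hs0 : 0 ≤ s) (hst : s ≤ t)
    (hA : ∀ u ∈ Set.Icc (0:ℝ) t, ‖exp (u • A)‖ ≤ 1)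
    (hB : ∀ u ∈ Set.Icc (0:ℝ) t, ‖exp (u • B)‖ ≤ 1) :
    ‖(exp (s • ((2⁻¹:ℝ) • A)) * B - B * exp (s • ((2⁻¹:ℝ) • A)))
        * (exp (s • B) * exp (s • ((2⁻¹:ℝ) • A)))
      + exp (s • ((2⁻¹:ℝ) • A))
        * ((exp (s • B) * ((2⁻¹:ℝ) • A) - ((2⁻¹:ℝ) • A) * exp (s • B))
            * exp (s • ((2⁻¹:ℝ) • A)))‖
      ≤ s ^ 2 / 8 * (‖A * (A * B - B * A) - (A * B - B * A) * A‖
          + 2 * ‖B * (A * B - B * A) - (A * B - B * A) * B‖) := by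
  set P : 𝔸 := (2⁻¹:ℝ) • A with hP
  set E : 𝔸 := exp (s • P) with hE
  set F : 𝔸 := exp (s • B) with hF
  have hPnorm : ∀ v ∈ Set.Icc (0:ℝ) s, ‖exp (v • P)‖ ≤ 1 := by
    intro v hv
    have hvP : v • P = (v / 2) • A := by
      rw [hP, smul_smul]; congr 1
    rw [hvP]
    exact hA _ ⟨by linarith [hv.1], by linarith [hv.1, hv.2]⟩
  have hBnorm : ∀ v ∈ Set.Icc (0:ℝ) s, ‖exp (v • B)‖ ≤ 1 :=
    fun v hv => hB v ⟨hv.1, le_trans hv.2 hst⟩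
  have hEnorm : ‖E‖ ≤ 1 := hPnorm s ⟨hs0, le_refl s⟩
  have hFnorm : ‖F‖ ≤ 1 := hBnorm s ⟨hs0, le_refl s⟩
  have hcomm1 : E * B - B * E
      = ∫ u in (0:ℝ)..s, exp (u • P) * (P * B - B * P) * exp ((s - u) • P) := by
    have h := conj_sub_eq P B s 0 s
    simpa using h
  have hcomm2 : F * P - P * F
      = ∫ u in (0:ℝ)..s, exp (u • B) * (B * P - P * B) * exp ((s - u) • B) := by
    have h := conj_sub_eq B P s 0 s
    simpa using h
  set J₁ : 𝔸 := ∫ u in (0:ℝ)..s, exp (u • P) * (P * B - B * P) * exp ((s - u) • P)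
    with hJ₁
  set J₂ : 𝔸 := ∫ u in (0:ℝ)..s, exp (u • B) * (B * P - P * B) * exp ((s - u) • B)
    with hJ₂
  have h1 : ‖J₁ - s • (E * (P * B - B * P))‖
      ≤ s ^ 2 / 2 * ‖P * (P * B - B * P) - (P * B - B * P) * P‖ :=
    key_bound P (P * B - B * P) s hs0 hPnorm
  have h2 : ‖J₂ - s • ((B * P - P * B) * F)‖
      ≤ s ^ 2 / 2 * ‖B * (B * P - P * B) - (B * P - P * B) * B‖ :=
    key_bound' B (B * P - P * B) s hs0 hBnorm
  -- norm computations for double commutators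
  have e1 : P * B - B * P = (2⁻¹:ℝ) • (A * B - B * A) := by
    rw [hP, smul_mul_assoc, mul_smul_comm, ← smul_sub]
  have e2 : P * (P * B - B * P) - (P * B - B * P) * P
      = (4⁻¹:ℝ) • (A * (A * B - B * A) - (A * B - B * A) * A) := by
    rw [e1, hP]
    simp only [smul_mul_assoc, mul_smul_comm, smul_smul, ← smul_sub]
    norm_num
  have e3 : B * (B * P - P * B) - (B * P - P * B) * B
      = (2⁻¹:ℝ) • (B * (B * A - A * B) - (B * A - A * B) * B) := by
    have h : B * P - P * B = (2⁻¹:ℝ) • (B * A - A * B) := by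
      rw [hP, smul_mul_assoc, mul_smul_comm, ← smul_sub]
    rw [h]
    simp only [smul_mul_assoc, mul_smul_comm, ← smul_sub]
  have e4 : B * (B * A - A * B) - (B * A - A * B) * B
      = -(B * (A * B - B * A) - (A * B - B * A) * B) := by noncomm_ring
  have n1 : ‖P * (P * B - B * P) - (P * B - B * P) * P‖
      = 4⁻¹ * ‖A * (A * B - B * A) - (A * B - B * A) * A‖ := by
    rw [e2, norm_smul, Real.norm_eq_abs]
    norm_num
  have n2 : ‖B * (B * P - P * B) - (B * P - P * B) * B‖
      = 2⁻¹ * ‖B * (A * B - B * A) - (A * B - B * A) * B‖ := by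
    rw [e3, norm_smul, Real.norm_eq_abs, e4, norm_neg]
    norm_num
  rw [n1] at h1
  rw [n2] at h2
  clear_value J₁ J₂
  clear_value P E F
  clear hJ₁ hJ₂ hP hE hF e1 e2 e3 e4 n1 n2 hPnorm hBnorm hA hB
  -- algebraic rearrangement
  have hsplit : (E * B - B * E) * (F * E) + E * ((F * P - P * F) * E)
      = (J₁ - s • (E * (P * B - B * P))) * (F * E)
        + E * ((J₂ - s • ((B * P - P * B) * F)) * E) := by
    rw [hcomm1, hcomm2, sub_mul J₁ (s • (E * (P * B - B * P))) (F * E),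
      sub_mul J₂ (s • ((B * P - P * B) * F)) E,
      mul_sub E (J₂ * E) (s • ((B * P - P * B) * F) * E), sub_add_sub_comm]
    have hkey : s • (E * (P * B - B * P)) * (F * E)
        + E * (s • ((B * P - P * B) * F) * E) = 0 := by
      simp only [smul_mul_assoc, mul_smul_comm, ← smul_add]
      rw [show E * (P * B - B * P) * (F * E) + E * ((B * P - P * B) * F * E) = 0 from by
        noncomm_ring, smul_zero]
    rw [hkey, sub_zero]
  rw [hsplit]
  calc ‖(J₁ - s • (E * (P * B - B * P))) * (F * E)
        + E * ((J₂ - s • ((B * P - P * B) * F)) * E)‖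
      ≤ ‖(J₁ - s • (E * (P * B - B * P))) * (F * E)‖
        + ‖E * ((J₂ - s • ((B * P - P * B) * F)) * E)‖ := norm_add_le _ _
    _ ≤ ‖J₁ - s • (E * (P * B - B * P))‖ * (‖F‖ * ‖E‖)
        + ‖E‖ * (‖J₂ - s • ((B * P - P * B) * F)‖ * ‖E‖) := by
        gcongr <;> first
          | exact le_trans (norm_mul_le _ _)
              (mul_le_mul_of_nonneg_left (norm_mul_le _ _) (norm_nonneg _))
          | exact le_trans (norm_mul_le _ _)
              (mul_le_mul_of_nonneg_right (norm_mul_le _ _) (norm_nonneg _))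
    _ ≤ ‖J₁ - s • (E * (P * B - B * P))‖ * (1 * 1)
        + 1 * (‖J₂ - s • ((B * P - P * B) * F)‖ * 1) := by
        gcongr <;> first | exact hEnorm | exact hFnorm | positivity
    _ = ‖J₁ - s • (E * (P * B - B * P))‖ + ‖J₂ - s • ((B * P - P * B) * F)‖ := by ring
    _ ≤ s ^ 2 / 2 * (4⁻¹ * ‖A * (A * B - B * A) - (A * B - B * A) * A‖)
          + s ^ 2 / 2 * (2⁻¹ * ‖B * (A * B - B * A) - (A * B - B * A) * B‖) :=
        add_le_add h1 h2
    _ = s ^ 2 / 8 * (‖A * (A * B - B * A) - (A * B - B * A) * A‖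
          + 2 * ‖B * (A * B - B * A) - (A * B - B * A) * B‖) := by ring

lemma strang_main (P B Q : 𝔸) (hQ : Q = P + P + B) (t : ℝ) :
    exp (t • P) * exp (t • B) * exp (t • P) - exp (t • Q)
      = ∫ s in (0:ℝ)..t, exp ((t - s) • Q) *
          ((exp (s • P) * B - B * exp (s • P)) * (exp (s • B) * exp (s • P))
            + exp (s • P) * ((exp (s • B) * P - P * exp (s • B)) * exp (s • P))) := by
  have c1 : Continuous fun s : ℝ => exp (s • P) := cont_exp_smul P
  have c2 : Continuous fun s : ℝ => exp (s • B) := cont_exp_smul B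
  have ccont : Continuous fun s : ℝ => exp ((t - s) • Q) *
      ((exp (s • P) * B - B * exp (s • P)) * (exp (s • B) * exp (s • P))
        + exp (s • P) * ((exp (s • B) * P - P * exp (s • B)) * exp (s • P))) :=
    (cont_exp_rev Q t).mul
      ((((c1.mul continuous_const).sub (continuous_const.mul c1)).mul (c2.mul c1)).add
        (c1.mul (((c2.mul continuous_const).sub (continuous_const.mul c2)).mul c1)))
  have hderiv : ∀ s ∈ Set.uIcc (0:ℝ) t,
      HasDerivAt (fun s : ℝ => exp ((t - s) • Q) *
          (exp (s • P) * exp (s • B) * exp (s • P)))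
        (exp ((t - s) • Q) *
          ((exp (s • P) * B - B * exp (s • P)) * (exp (s • B) * exp (s • P))
            + exp (s • P) * ((exp (s • B) * P - P * exp (s • B)) * exp (s • P)))) s := by
    intro s _
    have h1 : HasDerivAt (fun s : ℝ => exp (s • P)) (P * exp (s • P)) s :=
      hasDerivAt_exp_smul_const' P s
    have h2 : HasDerivAt (fun s : ℝ => exp (s • B)) (B * exp (s • B)) s :=
      hasDerivAt_exp_smul_const' B s
    have h := (hasDerivAt_exp_rev Q t s).fun_mul ((h1.fun_mul h2).fun_mul h1)
    convert h using 1
    set G : 𝔸 := exp ((t - s) • Q) with hG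
    set E : 𝔸 := exp (s • P) with hE
    set F : 𝔸 := exp (s • B) with hF
    have hQG : Q * G = G * Q :=
      (((Commute.refl Q).smul_right (t - s)).exp_right).eq
    have hEP : E * P = P * E :=
      (((Commute.refl P).smul_right s).exp_right).eq.symm
    clear_value G E F
    have swap : E * ((F * P - P * F) * E) = E * (F * (P * E)) - E * P * (F * E) := by
      noncomm_ring
    rw [swap, hEP, hQG, hQ]
    noncomm_ring
  rw [intervalIntegral.integral_eq_sub_of_hasDerivAt hderiv
    (Continuous.intervalIntegrable ccont _ _)]
  simp [exp_zero]


end StrangHelpers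

theorem strang_error_bound {𝔸 : Type*} [NormedRing 𝔸] [NormedAlgebra ℝ 𝔸]
    [CompleteSpace 𝔸] (A B : 𝔸) (t : ℝ) (ht : 0 ≤ t)
    (hA : ∀ s ∈ Set.Icc (0:ℝ) t, ‖exp (s • A)‖ ≤ 1)
    (hB : ∀ s ∈ Set.Icc (0:ℝ) t, ‖exp (s • B)‖ ≤ 1)
    (hAB : ∀ s ∈ Set.Icc (0:ℝ) t, ‖exp (s • (A + B))‖ ≤ 1) :
    ‖exp ((t / 2) • A) * exp (t • B) * exp ((t / 2) • A) - exp (t • (A + B))‖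
      ≤ t ^ 3 / 24 * (‖A * (A * B - B * A) - (A * B - B * A) * A‖
          + 2 * ‖B * (A * B - B * A) - (A * B - B * A) * B‖) := by
  have hQ : A + B = (2⁻¹:ℝ) • A + (2⁻¹:ℝ) • A + B := by
    rw [← add_smul]; norm_num
  have hmain := strang_main ((2⁻¹:ℝ) • A) B (A + B) hQ t
  have hhalf : (t / 2) • A = t • ((2⁻¹:ℝ) • A) := by
    rw [smul_smul]; congr 1
  have hKnn : (0:ℝ) ≤ ‖A * (A * B - B * A) - (A * B - B * A) * A‖
      + 2 * ‖B * (A * B - B * A) - (A * B - B * A) * B‖ := by positivity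
  rw [hhalf, hmain]
  refine le_trans (intervalIntegral.norm_integral_le_of_norm_le ht
    (g := fun s => s ^ 2 / 8 * (‖A * (A * B - B * A) - (A * B - B * A) * A‖
      + 2 * ‖B * (A * B - B * A) - (A * B - B * A) * B‖)) ?_ ?_) ?_
  · filter_upwards with s hs
    calc ‖exp ((t - s) • (A + B)) *
          ((exp (s • ((2⁻¹:ℝ) • A)) * B - B * exp (s • ((2⁻¹:ℝ) • A)))
              * (exp (s • B) * exp (s • ((2⁻¹:ℝ) • A)))
            + exp (s • ((2⁻¹:ℝ) • A))
              * ((exp (s • B) * ((2⁻¹:ℝ) • A) - ((2⁻¹:ℝ) • A) * exp (s • B))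
                  * exp (s • ((2⁻¹:ℝ) • A))))‖
        ≤ ‖exp ((t - s) • (A + B))‖ *
          ‖(exp (s • ((2⁻¹:ℝ) • A)) * B - B * exp (s • ((2⁻¹:ℝ) • A)))
              * (exp (s • B) * exp (s • ((2⁻¹:ℝ) • A)))
            + exp (s • ((2⁻¹:ℝ) • A))
              * ((exp (s • B) * ((2⁻¹:ℝ) • A) - ((2⁻¹:ℝ) • A) * exp (s • B))
                  * exp (s • ((2⁻¹:ℝ) • A)))‖ := norm_mul_le _ _
      _ ≤ 1 * (s ^ 2 / 8 * (‖A * (A * B - B * A) - (A * B - B * A) * A‖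
            + 2 * ‖B * (A * B - B * A) - (A * B - B * A) * B‖)) := by
          apply mul_le_mul (hAB (t - s) ⟨by linarith [hs.1, hs.2], by linarith [hs.1]⟩)
            (defect_bound A B t s hs.1.le hs.2 hA hB) (norm_nonneg _) zero_le_one
      _ = s ^ 2 / 8 * (‖A * (A * B - B * A) - (A * B - B * A) * A‖
            + 2 * ‖B * (A * B - B * A) - (A * B - B * A) * B‖) := one_mul _
  · exact Continuous.intervalIntegrable
      (((continuous_pow 2).div_const 8).mul continuous_const) _ _
  · have hint : (∫ s in (0:ℝ)..t, s ^ 2 / 8 * (‖A * (A * B - B * A) - (A * B - B * A) * A‖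
        + 2 * ‖B * (A * B - B * A) - (A * B - B * A) * B‖))
        = t ^ 3 / 24 * (‖A * (A * B - B * A) - (A * B - B * A) * A‖
          + 2 * ‖B * (A * B - B * A) - (A * B - B * A) * B‖) := by
      have h8 : ∀ s : ℝ, s ^ 2 / 8 * (‖A * (A * B - B * A) - (A * B - B * A) * A‖
          + 2 * ‖B * (A * B - B * A) - (A * B - B * A) * B‖)
          = s ^ 2 * ((‖A * (A * B - B * A) - (A * B - B * A) * A‖
          + 2 * ‖B * (A * B - B * A) - (A * B - B * A) * B‖) / 8) := fun s => by ring
      simp_rw [h8]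
      rw [intervalIntegral.integral_mul_const, integral_pow]
      norm_num
      ring
    rw [hint]
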